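/- arXiv:2509.17480 — 9 statements merged into one kernel-verified Lean document; each statement's English description precedes it below -/
import Mathlib

section
/- Let 0 < r < R be real numbers and let λ > 0. Suppose v : ℝ → ℝ is continuous on [r, R], continuously differentiable on (r, R], positive on (r, R), and the function w(t) = t·v′(t) is differentiable at every t ∈ (r, R) with w′(t) = −λ·t·v(t). If v′(R) = 0 (Neumann condition at the outer radius), then v′(t) > 0 for every t ∈ (r, R). -/
open Set

theorem pos_of_hasDerivAt_neg_of_right_eq_zero {f f' : ℝ → ℝ} {a b : ℝ} (hab : a < b)
    (hf : ContinuousOn f (Icc a b)) (hderiv : ∀ x ∈ Ioo a b, HasDerivAt f (f' x) x)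
    (hneg : ∀ x ∈ Ioo a b, f' x < 0) (hb : f b = 0) : 0 < f a := by
  rw [← interior_Icc] at hderiv hneg
  have hanti : StrictAntiOn f (Icc a b) :=
    strictAntiOn_of_hasDerivWithinAt_neg (convex_Icc a b) hf
      (fun x hx => (hderiv x hx).hasDerivWithinAt) hneg
  exact hb ▸ hanti (left_mem_Icc.2 hab.le) (right_mem_Icc.2 hab.le) hab

theorem robin_neumann_radial_increasing_general
    (r R lam : ℝ) (hr : 0 < r) (hlam : 0 < lam)
    (v v' : ℝ → ℝ)
    (hderiv_cont : ContinuousOn v' (Ioc r R))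
    (hpos : ∀ t ∈ Ioo r R, 0 < v t)
    (hode : ∀ t ∈ Ioo r R, HasDerivAt (fun s => s * v' s) (-lam * t * v t) t)
    (hNeumann : v' R = 0) :
    ∀ t ∈ Ioo r R, 0 < v' t := by
  intro t ht
  have hsub : Ioo t R ⊆ Ioo r R := fun x hx => ⟨ht.1.trans hx.1, hx.2⟩
  -- the flux `s * v' s` is strictly decreasing on `[t, R]` and vanishes at `R`
  have hflux : 0 < t * v' t := by
    refine pos_of_hasDerivAt_neg_of_right_eq_zero (f := fun s => s * v' s) ht.2
      (continuousOn_id.mul (hderiv_cont.mono fun x hx => ⟨ht.1.trans_le hx.1, hx.2⟩))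
      (fun x hx => hode x (hsub hx)) (fun x hx => ?_) (by simp [hNeumann])
    have := mul_pos (mul_pos hlam (hr.trans (hsub hx).1)) (hpos x (hsub hx))
    linarith
  exact pos_of_mul_pos_right hflux (hr.trans ht.1).le

/-- Radial ODE form of Lemma 2.1(i): positive eigenvalue, Neumann condition at the
outer radius `R` implies the radial profile is strictly increasing on `(r, R)`. -/
theorem robin_neumann_radial_increasing
    (r R lam : ℝ) (hr : 0 < r) (hrR : r < R) (hlam : 0 < lam)
    (v v' : ℝ → ℝ)
    (hcont : ContinuousOn v (Icc r R))
    (hderiv : ∀ t ∈ Ioc r R, HasDerivAt v (v' t) t)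
    (hderiv_cont : ContinuousOn v' (Ioc r R))
    (hpos : ∀ t ∈ Ioo r R, 0 < v t)
    (hode : ∀ t ∈ Ioo r R, HasDerivAt (fun s => s * v' s) (-lam * t * v t) t)
    (hNeumann : v' R = 0) :
    ∀ t ∈ Ioo r R, 0 < v' t :=
  robin_neumann_radial_increasing_general r R lam hr hlam v v' hderiv_cont hpos hode hNeumann
end

section
/- Let 0 < r < R be real numbers and let λ < 0. Suppose v : ℝ → ℝ is continuous on [r, R], continuously differentiable on [r, R), positive on (r, R), and the function w(t) = t·v′(t) is differentiable at every t ∈ (r, R) with w′(t) = −λ·t·v(t). If v′(r) = 0 (Neumann condition at the inner radius), then v′(t) > 0 for every t ∈ (r, R). -/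
open Set

/- The flux `w(t) = t v'(t)` has derivative `-λ t v(t) > 0` on `(r, R)`, so it increases strictly;
since `w(r) = 0` by the Neumann condition, `t v'(t) > 0` and hence `v'(t) > 0` for `t > r`. -/

theorem strictMonoOn_mul_deriv_of_hasDerivAt_pos {a b c : ℝ} {v v' : ℝ → ℝ} (ha : 0 ≤ a)
    (hc : 0 < c) (hv' : ContinuousOn v' (Icc a b)) (hpos : ∀ s ∈ Ioo a b, 0 < v s)
    (hode : ∀ s ∈ Ioo a b, HasDerivAt (fun s => s * v' s) (c * s * v s) s) :
    StrictMonoOn (fun s => s * v' s) (Icc a b) := by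
  refine strictMonoOn_of_hasDerivWithinAt_pos (f' := fun s => c * s * v s) (convex_Icc a b)
    (continuousOn_id.mul hv') (fun s hs => ?_) (fun s hs => ?_) <;> rw [interior_Icc] at hs
  · exact (hode s hs).hasDerivWithinAt
  · exact mul_pos (mul_pos hc (ha.trans_lt hs.1)) (hpos s hs)

theorem neumann_robin_radial_increasing_general
    (r R lam : ℝ) (hr : 0 < r) (hlam : lam < 0)
    (v v' : ℝ → ℝ)
    (hderiv_cont : ContinuousOn v' (Ico r R))
    (hpos : ∀ t ∈ Ioo r R, 0 < v t)
    (hode : ∀ t ∈ Ioo r R, HasDerivAt (fun s => s * v' s) (-lam * t * v t) t)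
    (hNeumann : v' r = 0) :
    ∀ t ∈ Ioo r R, 0 < v' t := by
  intro t ht
  have hsub : Ioo r t ⊆ Ioo r R := Ioo_subset_Ioo_right ht.2.le
  have hflux : r * v' r < t * v' t :=
    strictMonoOn_mul_deriv_of_hasDerivAt_pos hr.le (neg_pos.mpr hlam)
      (hderiv_cont.mono (Icc_subset_Ico_right ht.2)) (fun s hs => hpos s (hsub hs))
      (fun s hs => hode s (hsub hs)) (left_mem_Icc.2 ht.1.le) (right_mem_Icc.2 ht.1.le) ht.1
  rw [hNeumann, mul_zero] at hflux
  exact pos_of_mul_pos_right hflux (hr.trans ht.1).le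

/-- Radial ODE form of Lemma 2.2(ii): negative eigenvalue, Neumann condition at the
inner radius `r` implies the radial profile is strictly increasing on `(r, R)`. -/
theorem neumann_robin_radial_increasing
    (r R lam : ℝ) (hr : 0 < r) (hrR : r < R) (hlam : lam < 0)
    (v v' : ℝ → ℝ)
    (hcont : ContinuousOn v (Icc r R))
    (hderiv : ∀ t ∈ Ico r R, HasDerivAt v (v' t) t)
    (hderiv_cont : ContinuousOn v' (Ico r R))
    (hpos : ∀ t ∈ Ioo r R, 0 < v t)
    (hode : ∀ t ∈ Ioo r R, HasDerivAt (fun s => s * v' s) (-lam * t * v t) t)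
    (hNeumann : v' r = 0) :
    ∀ t ∈ Ioo r R, 0 < v' t :=
  neumann_robin_radial_increasing_general r R lam hr hlam v v' hderiv_cont hpos hode hNeumann
end

section
/- Let 0 < r < R, let h_in > 0, h_out > 0, and let λ > 0. Suppose v : ℝ → ℝ is continuously differentiable on [r, R], positive on [r, R], the function w(t) = t·v′(t) is differentiable at every t ∈ (r, R) with w′(t) = −λ·t·v(t), and v satisfies the Robin boundary conditions v′(r) = h_in·v(r) and v′(R) = −h_out·v(R). Then there exists a unique σ ∈ (r, R) such that v′(σ) = 0; moreover v′(t) > 0 for all t ∈ (r, σ) and v′(t) < 0 for all t ∈ (σ, R). -/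
/-!
The flux `w t = t * v' t` has derivative `-λ t v(t) < 0`, so it is strictly decreasing on
`[r, R]`. The Robin conditions with positive parameters make `w r > 0 > w R`, hence `w` has
exactly one zero `σ`, positive before and negative after it; since `t > 0`, so does `v'`.
-/

open Set

section SignChange

variable {f : ℝ → ℝ} {a b σ : ℝ}

theorem StrictAntiOn.exists_sign_change (hab : a ≤ b) (hf : ContinuousOn f (Icc a b))
    (hanti : StrictAntiOn f (Icc a b)) (ha : 0 < f a) (hb : f b < 0) :
    ∃ σ ∈ Ioo a b, f σ = 0 ∧ (∀ t ∈ Ioo a σ, 0 < f t) ∧ (∀ t ∈ Ioo σ b, f t < 0) := by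
  obtain ⟨σ, hσ, hσ0⟩ := intermediate_value_Ioo' hab hf ⟨hb, ha⟩
  have hσI : σ ∈ Icc a b := Ioo_subset_Icc_self hσ
  refine ⟨σ, hσ, hσ0, fun t ht => ?_, fun t ht => ?_⟩
  · exact hσ0 ▸ hanti ⟨ht.1.le, ht.2.le.trans hσI.2⟩ hσI ht.2
  · exact hσ0 ▸ hanti hσI ⟨hσI.1.trans ht.1.le, ht.2.le⟩ ht.1

theorem eq_of_sign_change (hpos : ∀ t ∈ Ioo a σ, 0 < f t) (hneg : ∀ t ∈ Ioo σ b, f t < 0)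
    {τ : ℝ} (hτ : τ ∈ Ioo a b) (hτ0 : f τ = 0) : τ = σ := by
  rcases lt_trichotomy τ σ with hlt | heq | hgt
  · exact absurd hτ0 (hpos τ ⟨hτ.1, hlt⟩).ne'
  · exact heq
  · exact absurd hτ0 (hneg τ ⟨hgt, hτ.2⟩).ne

end SignChange

theorem robin_robin_radial_unimodal_pos_general
    (r R h_in h_out lam : ℝ) (hr : 0 < r) (hrR : r < R)
    (hhin : 0 < h_in) (hhout : 0 < h_out) (hlam : 0 < lam)
    (v v' : ℝ → ℝ)
    (hderiv_cont : ContinuousOn v' (Icc r R))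
    (hpos : ∀ t ∈ Icc r R, 0 < v t)
    (hode : ∀ t ∈ Ioo r R, HasDerivAt (fun s => s * v' s) (-lam * t * v t) t)
    (hin : v' r = h_in * v r) (hout : v' R = -h_out * v R) :
    ∃ σ ∈ Ioo r R, v' σ = 0 ∧ (∀ t ∈ Ioo r σ, 0 < v' t) ∧ (∀ t ∈ Ioo σ R, v' t < 0) ∧
      ∀ τ ∈ Ioo r R, v' τ = 0 → τ = σ := by
  have hw_cont : ContinuousOn (fun s => s * v' s) (Icc r R) := continuousOn_id.mul hderiv_cont
  have hw_anti : StrictAntiOn (fun s => s * v' s) (Icc r R) := by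
    refine strictAntiOn_of_hasDerivWithinAt_neg (f' := fun t => -lam * t * v t)
      (convex_Icc r R) hw_cont (fun t ht => ?_) (fun t ht => ?_) <;> rw [interior_Icc] at ht
    · exact (hode t ht).hasDerivWithinAt
    · have := mul_pos (mul_pos hlam (hr.trans ht.1)) (hpos t (Ioo_subset_Icc_self ht))
      linarith
  have hw_r : 0 < r * v' r := by
    rw [hin]; exact mul_pos hr (mul_pos hhin (hpos r (left_mem_Icc.2 hrR.le)))
  have hw_R : R * v' R < 0 := by
    have := mul_pos (hr.trans hrR) (mul_pos hhout (hpos R (right_mem_Icc.2 hrR.le)))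
    rw [hout]; linarith
  obtain ⟨σ, hσ, hσ0, hw_pos, hw_neg⟩ := hw_anti.exists_sign_change hrR.le hw_cont hw_r hw_R
  have hv'_pos : ∀ t ∈ Ioo r σ, 0 < v' t := fun t ht =>
    pos_of_mul_pos_right (hw_pos t ht) (hr.trans ht.1).le
  have hv'_neg : ∀ t ∈ Ioo σ R, v' t < 0 := fun t ht =>
    neg_of_mul_neg_right (hw_neg t ht) (hr.trans (hσ.1.trans ht.1)).le
  have hv'σ : v' σ = 0 := (mul_eq_zero.1 hσ0).resolve_left (hr.trans hσ.1).ne'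
  exact ⟨σ, hσ, hv'σ, hv'_pos, hv'_neg, fun τ hτ => eq_of_sign_change hv'_pos hv'_neg hτ⟩

/-- Radial ODE form of Lemma 2.3(i): both Robin parameters positive, positive eigenvalue.
The radial profile increases up to a unique interior radius `σ` and decreases afterwards. -/
theorem robin_robin_radial_unimodal_pos
    (r R h_in h_out lam : ℝ) (hr : 0 < r) (hrR : r < R)
    (hhin : 0 < h_in) (hhout : 0 < h_out) (hlam : 0 < lam)
    (v v' : ℝ → ℝ)
    (hderiv : ∀ t ∈ Icc r R, HasDerivAt v (v' t) t)
    (hderiv_cont : ContinuousOn v' (Icc r R))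
    (hpos : ∀ t ∈ Icc r R, 0 < v t)
    (hode : ∀ t ∈ Ioo r R, HasDerivAt (fun s => s * v' s) (-lam * t * v t) t)
    (hin : v' r = h_in * v r) (hout : v' R = -h_out * v R) :
    ∃ σ ∈ Ioo r R, v' σ = 0 ∧ (∀ t ∈ Ioo r σ, 0 < v' t) ∧ (∀ t ∈ Ioo σ R, v' t < 0) ∧
      ∀ τ ∈ Ioo r R, v' τ = 0 → τ = σ :=
  robin_robin_radial_unimodal_pos_general r R h_in h_out lam hr hrR hhin hhout hlam v v' hderiv_cont
    hpos hode hin hout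
end

section
/- Let 0 < r < R, let h_in < 0, h_out < 0, and let λ < 0. Suppose v : ℝ → ℝ is continuously differentiable on [r, R], positive on [r, R], the function w(t) = t·v′(t) is differentiable at every t ∈ (r, R) with w′(t) = −λ·t·v(t), and v satisfies the Robin boundary conditions v′(r) = h_in·v(r) and v′(R) = −h_out·v(R). Then there exists a unique σ ∈ (r, R) such that v′(σ) = 0; moreover v′(t) < 0 for all t ∈ (r, σ) and v′(t) > 0 for all t ∈ (σ, R). -/
/-!
The flux `w(t) = t v'(t)` has derivative `-λ t v(t) > 0`, so it is strictly increasing on `[r, R]`.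
The Robin conditions with negative parameters give `w(r) = r h_in v(r) < 0 < -R h_out v(R) = w(R)`,
so `w`, and with it `v' = w / t`, changes sign exactly once, at the zero of `w`.
-/

open Set

theorem StrictMonoOn.exists_unique_crossing
    {α δ : Type*} [ConditionallyCompleteLinearOrder α] [TopologicalSpace α] [OrderTopology α]
    [DenselyOrdered α] [LinearOrder δ] [TopologicalSpace δ] [OrderClosedTopology δ]
    {f : α → δ} {a b : α} {c : δ} (hab : a ≤ b) (hcont : ContinuousOn f (Icc a b))
    (hmono : StrictMonoOn f (Icc a b)) (ha : f a < c) (hb : c < f b) :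
    ∃ σ ∈ Ioo a b, f σ = c ∧ (∀ t ∈ Ioo a σ, f t < c) ∧ (∀ t ∈ Ioo σ b, c < f t) ∧
      ∀ τ ∈ Ioo a b, f τ = c → τ = σ := by
  obtain ⟨σ, hσ, hσc⟩ := intermediate_value_Ioo hab hcont ⟨ha, hb⟩
  have hσ' : σ ∈ Icc a b := Ioo_subset_Icc_self hσ
  refine ⟨σ, hσ, hσc, fun t ht => ?_, fun t ht => ?_, fun τ hτ hτc => ?_⟩
  · exact hσc ▸ hmono ⟨ht.1.le, (ht.2.trans hσ.2).le⟩ hσ' ht.2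
  · exact hσc ▸ hmono hσ' ⟨(hσ.1.trans ht.1).le, ht.2.le⟩ ht.1
  · exact hmono.injOn (Ioo_subset_Icc_self hτ) hσ' (hτc.trans hσc.symm)

theorem robin_robin_radial_unimodal_neg_general
    (r R h_in h_out lam : ℝ) (hr : 0 < r) (hrR : r < R)
    (hhin : h_in < 0) (hhout : h_out < 0) (hlam : lam < 0)
    (v v' : ℝ → ℝ)
    (hderiv_cont : ContinuousOn v' (Icc r R))
    (hpos : ∀ t ∈ Icc r R, 0 < v t)
    (hode : ∀ t ∈ Ioo r R, HasDerivAt (fun s => s * v' s) (-lam * t * v t) t)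
    (hin : v' r = h_in * v r) (hout : v' R = -h_out * v R) :
    ∃ σ ∈ Ioo r R, v' σ = 0 ∧ (∀ t ∈ Ioo r σ, v' t < 0) ∧ (∀ t ∈ Ioo σ R, 0 < v' t) ∧
      ∀ τ ∈ Ioo r R, v' τ = 0 → τ = σ := by
  set w : ℝ → ℝ := fun s => s * v' s
  have hw_cont : ContinuousOn w (Icc r R) := continuousOn_id.mul hderiv_cont
  have hw_mono : StrictMonoOn w (Icc r R) := by
    refine strictMonoOn_of_hasDerivWithinAt_pos (f' := fun t => -lam * t * v t) (convex_Icc r R)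
      hw_cont (fun t ht => ?_) (fun t ht => ?_) <;> simp only [interior_Icc] at ht ⊢
    · exact (hode t ht).hasDerivWithinAt
    · exact mul_pos (mul_pos (neg_pos.2 hlam) (hr.trans ht.1)) (hpos t (Ioo_subset_Icc_self ht))
  have hw_r : w r < 0 := by
    have := hpos r (left_mem_Icc.2 hrR.le)
    simp only [w, hin]
    exact mul_neg_of_pos_of_neg hr (mul_neg_of_neg_of_pos hhin this)
  have hw_R : 0 < w R := by
    have := hpos R (right_mem_Icc.2 hrR.le)
    simp only [w, hout]
    exact mul_pos (hr.trans hrR) (mul_pos (neg_pos.2 hhout) this)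
  obtain ⟨σ, hσ, hσ0, hneg, hpos', huniq⟩ :=
    hw_mono.exists_unique_crossing hrR.le hw_cont hw_r hw_R
  refine ⟨σ, hσ, (mul_eq_zero.1 hσ0).resolve_left (hr.trans hσ.1).ne',
    fun t ht => ?_, fun t ht => ?_, fun τ hτ hτ0 => huniq τ hτ (by simp [w, hτ0])⟩
  · exact neg_of_mul_neg_right (hneg t ht) (hr.trans ht.1).le
  · exact pos_of_mul_pos_right (hpos' t ht) (hr.trans (hσ.1.trans ht.1)).le

/-- Radial ODE form of Lemma 2.3(ii): both Robin parameters negative, negative eigenvalue.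
The radial profile decreases down to a unique interior radius `σ` and increases afterwards. -/
theorem robin_robin_radial_unimodal_neg
    (r R h_in h_out lam : ℝ) (hr : 0 < r) (hrR : r < R)
    (hhin : h_in < 0) (hhout : h_out < 0) (hlam : lam < 0)
    (v v' : ℝ → ℝ)
    (hderiv : ∀ t ∈ Icc r R, HasDerivAt v (v' t) t)
    (hderiv_cont : ContinuousOn v' (Icc r R))
    (hpos : ∀ t ∈ Icc r R, 0 < v t)
    (hode : ∀ t ∈ Ioo r R, HasDerivAt (fun s => s * v' s) (-lam * t * v t) t)
    (hin : v' r = h_in * v r) (hout : v' R = -h_out * v R) :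
    ∃ σ ∈ Ioo r R, v' σ = 0 ∧ (∀ t ∈ Ioo r σ, v' t < 0) ∧ (∀ t ∈ Ioo σ R, 0 < v' t) ∧
      ∀ τ ∈ Ioo r R, v' τ = 0 → τ = σ :=
  robin_robin_radial_unimodal_neg_general r R h_in h_out lam hr hrR hhin hhout hlam v v' hderiv_cont
    hpos hode hin hout
end

section
/- Let 0 < r < δ₁, let h ∈ ℝ and λ ∈ ℝ. Suppose v : ℝ → ℝ is twice continuously differentiable on [r, δ₁], satisfies (t·v′(t))′ = −λ·t·v(t) for all t ∈ (r, δ₁), satisfies the Robin condition v′(r) = h·v(r) at r, and satisfies v(δ₁) > 0 and v′(δ₁) < 0. Then the strict inequality ∫_r^{δ₁} t·v′(t)² dt + h·r·v(r)² < λ·∫_r^{δ₁} t·v(t)² dt holds. -/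
open Set intervalIntegral

/-!
Multiplying `(t v')' = -λ t v` by `v` and integrating by parts over `[r, δ₁]` gives the identity
`∫ t v'² = δ₁ v'(δ₁) v(δ₁) - r v'(r) v(r) + λ ∫ t v²`. The Robin condition turns the boundary term
at `r` into `-h r v(r)²`, and the boundary term at `δ₁` is negative by the sign assumptions.
-/

/-- Energy identity for the Sturm–Liouville equation `(p v')' = -λ w v` on `[a, b]`. -/
theorem integral_mul_deriv_sq_eq_of_hasDerivAt_flux {a b lam : ℝ} (hab : a ≤ b)
    {p w v v' : ℝ → ℝ} (hp : ContinuousOn p (Icc a b)) (hw : ContinuousOn w (Icc a b))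
    (hv : ∀ t ∈ Icc a b, HasDerivAt v (v' t) t) (hv' : ContinuousOn v' (Icc a b))
    (hflux : ∀ t ∈ Ioo a b, HasDerivAt (fun s => p s * v' s) (-lam * w t * v t) t) :
    ∫ t in a..b, p t * v' t ^ 2
      = p b * v' b * v b - p a * v' a * v a + lam * ∫ t in a..b, w t * v t ^ 2 := by
  have hv_cont : ContinuousOn v (Icc a b) := HasDerivAt.continuousOn hv
  have hIoo : Ioo (min a b) (max a b) = Ioo a b := by rw [min_eq_left hab, max_eq_right hab]
  have hlam_wv : IntervalIntegrable (fun t => -lam * w t * v t) MeasureTheory.volume a b :=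
    (((continuousOn_const.mul hw).mul hv_cont).mono (uIcc_of_le hab).subset).intervalIntegrable
  have hparts := integral_mul_deriv_eq_deriv_mul_of_hasDerivAt (u := fun s => p s * v' s)
    ((hp.mul hv').mono (uIcc_of_le hab).subset) (hv_cont.mono (uIcc_of_le hab).subset)
    (hIoo ▸ hflux) (hIoo ▸ fun t ht => hv t (Ioo_subset_Icc_self ht)) hlam_wv
    ((hv'.mono (uIcc_of_le hab).subset).intervalIntegrable)
  calc ∫ t in a..b, p t * v' t ^ 2 = ∫ t in a..b, p t * v' t * v' t := by
        congr with t; ring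
    _ = p b * v' b * v b - p a * v' a * v a - ∫ t in a..b, -lam * w t * v t * v t := hparts
    _ = p b * v' b * v b - p a * v' a * v a + lam * ∫ t in a..b, w t * v t ^ 2 := by
        rw [sub_eq_add_neg, ← integral_const_mul, ← integral_neg]
        congr 2 with t; ring

theorem hasDerivAt_mul_deriv_of_radial_eq {lam t : ℝ} {v v' v'' : ℝ → ℝ}
    (hv' : HasDerivAt v' (v'' t) t) (hode : v' t + t * v'' t = -lam * t * v t) :
    HasDerivAt (fun s => s * v' s) (-lam * t * v t) t := by
  simpa only [one_mul, hode] using (hasDerivAt_id' t).fun_mul hv'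

theorem robin_integral_strict_inequality_general
    (r δ₁ h lam : ℝ) (hr : 0 < r) (hrδ : r < δ₁)
    (v v' v'' : ℝ → ℝ)
    (hd1 : ∀ t ∈ Icc r δ₁, HasDerivAt v (v' t) t)
    (hd2 : ∀ t ∈ Icc r δ₁, HasDerivAt v' (v'' t) t)
    (hode : ∀ t ∈ Ioo r δ₁, v' t + t * v'' t = -lam * t * v t)
    (hrobin : v' r = h * v r)
    (hvpos : 0 < v δ₁) (hvneg : v' δ₁ < 0) :
    (∫ t in r..δ₁, t * (v' t) ^ 2) + h * r * (v r) ^ 2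
      < lam * ∫ t in r..δ₁, t * (v t) ^ 2 := by
  have henergy := integral_mul_deriv_sq_eq_of_hasDerivAt_flux hrδ.le continuousOn_id
    continuousOn_id hd1 (HasDerivAt.continuousOn hd2)
    (fun t ht => hasDerivAt_mul_deriv_of_radial_eq (hd2 t (Ioo_subset_Icc_self ht)) (hode t ht))
  have hboundary : δ₁ * v' δ₁ * v δ₁ < 0 :=
    mul_neg_of_neg_of_pos (mul_neg_of_pos_of_neg (hr.trans hrδ) hvneg) hvpos
  simp only [id_eq] at henergy
  rw [henergy, hrobin]
  linarith

/-- The strict integral inequality from the proof of Lemma 2.4(ii): multiplying the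
Sturm–Liouville equation by `v` and integrating by parts over `(r, δ₁)`. -/
theorem robin_integral_strict_inequality
    (r δ₁ h lam : ℝ) (hr : 0 < r) (hrδ : r < δ₁)
    (v v' v'' : ℝ → ℝ)
    (hd1 : ∀ t ∈ Icc r δ₁, HasDerivAt v (v' t) t)
    (hd2 : ∀ t ∈ Icc r δ₁, HasDerivAt v' (v'' t) t)
    (hc0 : ContinuousOn v (Icc r δ₁))
    (hc1 : ContinuousOn v' (Icc r δ₁))
    (hc2 : ContinuousOn v'' (Icc r δ₁))
    (hode : ∀ t ∈ Ioo r δ₁, v' t + t * v'' t = -lam * t * v t)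
    (hrobin : v' r = h * v r)
    (hvpos : 0 < v δ₁) (hvneg : v' δ₁ < 0) :
    (∫ t in r..δ₁, t * (v' t) ^ 2) + h * r * (v r) ^ 2
      < lam * ∫ t in r..δ₁, t * (v t) ^ 2 :=
  robin_integral_strict_inequality_general r δ₁ h lam hr hrδ v v' v'' hd1 hd2 hode hrobin hvpos
    hvneg
end

section
/- Let z₁ = (x₁, y₁) ∈ ℝ² and let γ = (x, y) : [0, ∞) → ℝ² be differentiable with γ′(t) ≠ 0 and γ(t) ≠ z₁ for every t ≥ 0. Assume that γ(t) → z₁ as t → ∞ and that the normalized tangents converge: γ′(t)/‖γ′(t)‖ → (a, b) as t → ∞ for some (a, b) ∈ ℝ². Then the scalar product ⟨ γ′(t)/‖γ′(t)‖ , ( −(y(t) − y₁), x(t) − x₁ )/‖γ(t) − z₁‖ ⟩ converges to 0 as t → ∞. -/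
/-!
Write `u = γ - z₁`. Once the unit tangent is within angle `arccos c` of its limit `e`, the curve
moves in direction `e` at least at rate `c` times its speed: `c ‖u'‖ ≤ ⟪e, u'⟫`. The mean value
inequality on `[t, r]`, followed by `r → ∞` and `u → 0`, turns this into `c ‖u t‖ ≤ -⟪e, u t⟫`.
As `c → 1`, the secant direction `u / ‖u‖` therefore tends to `-e`, and its rotation by a right
angle tends to a vector orthogonal to `e`.
-/

open Filter Topology
open scoped RealInnerProductSpace

theorem eventually_norm_le_neg_of_norm_deriv_le {E : Type*} [NormedAddCommGroup E]
    [NormedSpace ℝ E] {f f' : ℝ → E} {B B' : ℝ → ℝ}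
    (hderiv : ∀ᶠ t in atTop, HasDerivAt f (f' t) t ∧ HasDerivAt B (B' t) t ∧ ‖f' t‖ ≤ B' t)
    (hf : Tendsto f atTop (𝓝 0)) (hB : Tendsto B atTop (𝓝 0)) :
    ∀ᶠ t in atTop, ‖f t‖ ≤ -B t := by
  obtain ⟨a, ha⟩ := eventually_atTop.mp hderiv
  filter_upwards [eventually_ge_atTop a] with t hat
  have fence : ∀ r, t ≤ r → ‖f r - f t‖ ≤ B r - B t := fun r htr => by
    have hf' s (hs : s ∈ Set.Icc t r) := ((ha s (hat.trans hs.1)).1.sub_const (f t))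
    have hB' s (hs : s ∈ Set.Icc t r) := ((ha s (hat.trans hs.1)).2.1.sub_const (B t))
    exact image_norm_le_of_norm_deriv_right_le_deriv_boundary'
      (fun s hs => (hf' s hs).continuousAt.continuousWithinAt)
      (fun s hs => (hf' s (Set.Ico_subset_Icc_self hs)).hasDerivWithinAt) (by simp)
      (fun s hs => (hB' s hs).continuousAt.continuousWithinAt)
      (fun s hs => (hB' s (Set.Ico_subset_Icc_self hs)).hasDerivWithinAt)
      (fun s hs => (ha s (hat.trans hs.1)).2.2) ⟨htr, le_rfl⟩
  have hlim := le_of_tendsto_of_tendsto ((hf.sub_const (f t)).norm) (hB.sub_const (B t))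
    ((eventually_ge_atTop t).mono fence)
  simpa using hlim

theorem norm_eq_one_of_tendsto_inv_norm_smul {α E : Type*} [NormedAddCommGroup E]
    [NormedSpace ℝ E] {l : Filter α} [l.NeBot] {v : α → E} {e : E}
    (hv : ∀ᶠ t in l, v t ≠ 0) (h : Tendsto (fun t => ‖v t‖⁻¹ • v t) l (𝓝 e)) : ‖e‖ = 1 :=
  tendsto_nhds_unique h.norm
    (tendsto_const_nhds.congr' (hv.mono fun _ ht => (norm_smul_inv_norm ht).symm))

section InnerProductSpace

variable {E : Type*} [NormedAddCommGroup E] [InnerProductSpace ℝ E]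
  {u u' : ℝ → E} {e : E}

theorem eventually_mul_norm_le_neg_inner_of_tendsto_tangent
    (hu : ∀ᶠ t in atTop, HasDerivAt u (u' t) t) (hu0 : Tendsto u atTop (𝓝 0))
    (htan : Tendsto (fun t => ‖u' t‖⁻¹ • u' t) atTop (𝓝 e)) (he : ‖e‖ = 1)
    {c : ℝ} (hc0 : 0 ≤ c) (hc1 : c < 1) :
    ∀ᶠ t in atTop, c * ‖u t‖ ≤ -⟪e, u t⟫ := by
  have hcos : ∀ᶠ t in atTop, c < ⟪e, ‖u' t‖⁻¹ • u' t⟫ := by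
    have := (tendsto_const_nhds (x := e)).inner (𝕜 := ℝ) htan
    rw [real_inner_self_eq_norm_sq, he, one_pow] at this
    exact this.eventually (lt_mem_nhds hc1)
  have hbound : ∀ᶠ t in atTop, HasDerivAt (fun s => c • u s) (c • u' t) t ∧
      HasDerivAt (fun s => ⟪e, u s⟫) ⟪e, u' t⟫ t ∧ ‖c • u' t‖ ≤ ⟪e, u' t⟫ := by
    filter_upwards [hu, hcos] with t hut hct
    refine ⟨hut.const_smul c, ((hasDerivAt_const t e).inner ℝ hut).congr_deriv (by simp), ?_⟩
    rw [norm_smul, Real.norm_of_nonneg hc0]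
    rw [real_inner_smul_right] at hct
    rcases eq_or_ne (u' t) 0 with h | h
    · simp [h]
    · have := mul_le_mul_of_nonneg_left hct.le (norm_nonneg (u' t))
      rwa [← mul_assoc, mul_inv_cancel₀ (norm_ne_zero_iff.mpr h), one_mul, mul_comm] at this
  have hcu : Tendsto (fun s => c • u s) atTop (𝓝 0) := by simpa using hu0.const_smul c
  have heu : Tendsto (fun s => ⟪e, u s⟫) atTop (𝓝 0) := by
    simpa using (tendsto_const_nhds (x := e)).inner (𝕜 := ℝ) hu0
  filter_upwards [eventually_norm_le_neg_of_norm_deriv_le hbound hcu heu] with t ht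
  rwa [norm_smul, Real.norm_of_nonneg hc0] at ht

theorem tendsto_secant_direction_of_tendsto_tangent
    (hu : ∀ᶠ t in atTop, HasDerivAt u (u' t) t) (hu0 : Tendsto u atTop (𝓝 0))
    (hne : ∀ᶠ t in atTop, u t ≠ 0)
    (htan : Tendsto (fun t => ‖u' t‖⁻¹ • u' t) atTop (𝓝 e)) (he : ‖e‖ = 1) :
    Tendsto (fun t => ‖u t‖⁻¹ • u t) atTop (𝓝 (-e)) := by
  have hunit : ∀ᶠ t in atTop, ‖‖u t‖⁻¹ • u t‖ = 1 := hne.mono fun t h => norm_smul_inv_norm h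
  have hcos : Tendsto (fun t => ⟪e, ‖u t‖⁻¹ • u t⟫) atTop (𝓝 (-1)) := by
    refine tendsto_order.2 ⟨fun a ha => hunit.mono fun t ht => ?_, fun b hb => ?_⟩
    · have := neg_le_of_abs_le (abs_real_inner_le_norm e (‖u t‖⁻¹ • u t))
      rw [he, ht, one_mul] at this
      linarith
    · obtain ⟨c, hc, hc1⟩ := exists_between (max_lt (neg_lt.mp hb) zero_lt_one)
      filter_upwards [eventually_mul_norm_le_neg_inner_of_tendsto_tangent hu hu0 htan he
        ((le_max_right _ _).trans hc.le) hc1, hne] with t ht hut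
      have hupos : 0 < ‖u t‖ := norm_pos_iff.mpr hut
      rw [real_inner_smul_right, inv_mul_lt_iff₀ hupos]
      nlinarith [le_max_left (-b) 0]
  have hsq : Tendsto (fun t => ‖‖u t‖⁻¹ • u t - -e‖ ^ 2) atTop (𝓝 0) := by
    have hlim : Tendsto (fun t => 2 + 2 * ⟪e, ‖u t‖⁻¹ • u t⟫) atTop (𝓝 0) := by
      simpa using (hcos.const_mul 2).const_add 2
    refine hlim.congr' (hunit.mono fun t ht => ?_)
    dsimp only
    rw [sub_neg_eq_add, norm_add_sq_real, ht, he, real_inner_comm]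
    ring
  rw [tendsto_iff_norm_sub_tendsto_zero]
  simpa [Real.sqrt_sq (norm_nonneg _)] using hsq.sqrt

end InnerProductSpace

noncomputable def rot90 : EuclideanSpace ℝ (Fin 2) →L[ℝ] EuclideanSpace ℝ (Fin 2) :=
  LinearMap.toContinuousLinearMap
    { toFun := fun v => WithLp.toLp 2 ![-v 1, v 0]
      map_add' := fun v w => by ext i; fin_cases i <;> simp [add_comm]
      map_smul' := fun c v => by ext i; fin_cases i <;> simp }

theorem rot90_apply (v : EuclideanSpace ℝ (Fin 2)) : rot90 v = WithLp.toLp 2 ![-v 1, v 0] := rfl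

theorem inner_rot90_self (v : EuclideanSpace ℝ (Fin 2)) : ⟪v, rot90 v⟫ = 0 := by
  simp [rot90_apply, PiLp.inner_apply, Fin.sum_univ_two, mul_comm]

/-- Lemma 4.6: secants of a curve converging to a point tend to be orthogonal to the
rotated (perpendicular) secant direction, i.e. the normalized tangents and the normalized
secants become collinear in the limit. -/
theorem secants_tend_to_tangents
    (z₁ : EuclideanSpace ℝ (Fin 2)) (γ γ' : ℝ → EuclideanSpace ℝ (Fin 2))
    (ab : EuclideanSpace ℝ (Fin 2))
    (hderiv : ∀ t : ℝ, 0 ≤ t → HasDerivAt γ (γ' t) t)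
    (hγ'ne : ∀ t : ℝ, 0 ≤ t → γ' t ≠ 0)
    (hγne : ∀ t : ℝ, 0 ≤ t → γ t ≠ z₁)
    (hlim : Tendsto γ atTop (𝓝 z₁))
    (htan : Tendsto (fun t => (‖γ' t‖)⁻¹ • γ' t) atTop (𝓝 ab)) :
    Tendsto
      (fun t => ⟪(‖γ' t‖)⁻¹ • γ' t,
        (‖γ t - z₁‖)⁻¹ • (WithLp.toLp 2 ![-(γ t 1 - z₁ 1), γ t 0 - z₁ 0] : EuclideanSpace ℝ (Fin 2))⟫)
      atTop (𝓝 0) := by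
  have hsec : Tendsto (fun t => ‖γ t - z₁‖⁻¹ • (γ t - z₁)) atTop (𝓝 (-ab)) :=
    tendsto_secant_direction_of_tendsto_tangent
      ((eventually_ge_atTop 0).mono fun t ht => (hderiv t ht).sub_const z₁)
      (by simpa using hlim.sub_const z₁)
      ((eventually_ge_atTop 0).mono fun t ht => sub_ne_zero.mpr (hγne t ht))
      htan
      (norm_eq_one_of_tendsto_inv_norm_smul ((eventually_ge_atTop 0).mono hγ'ne) htan)
  have hlimit := htan.inner (𝕜 := ℝ) ((rot90.continuous.tendsto _).comp hsec)
  rw [map_neg, inner_neg_right, inner_rot90_self, neg_zero] at hlimit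
  refine hlimit.congr fun t => ?_
  simp [rot90_apply]
end

section
/- Let Ω ⊆ ℝ² be a measurable set, and let u, v : ℝ² → ℝ be differentiable at every point of Ω with u > 0 on Ω. Assume that the functions x ↦ ⟨∇u(x), ∇(v²/u)(x)⟩ and x ↦ ‖∇v(x)‖² are Lebesgue integrable on Ω. Then ∫_Ω ⟨∇u(x), ∇(v²/u)(x)⟩ dx ≤ ∫_Ω ‖∇v(x)‖² dx. -/
open MeasureTheory
open scoped RealInnerProductSpace

/-!
Pointwise, with `t = v / u`, the quotient rule gives `∇(v² / u) = 2t ∇v - t² ∇u`, hence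
`‖∇v‖² - ⟪∇u, ∇(v² / u)⟫ = ‖∇v - t ∇u‖² ≥ 0` wherever `u ≠ 0`; integrate over `Ω`.
-/

section GradientCalculus

variable {E : Type*} [NormedAddCommGroup E] [InnerProductSpace ℝ E] [CompleteSpace E]
  {f g : E → ℝ} {f' g' x : E}

theorem HasGradientAt.mul (hf : HasGradientAt f f' x) (hg : HasGradientAt g g' x) :
    HasGradientAt (fun y => f y * g y) (f x • g' + g x • f') x := by
  rw [hasGradientAt_iff_hasFDerivAt, map_add, map_smulₛₗ, map_smulₛₗ]
  exact hf.hasFDerivAt.fun_mul hg.hasFDerivAt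

theorem HasGradientAt.inv (hf : HasGradientAt f f' x) (hx : f x ≠ 0) :
    HasGradientAt (fun y => (f y)⁻¹) (-(f x ^ 2)⁻¹ • f') x := by
  rw [hasGradientAt_iff_hasFDerivAt, map_smulₛₗ]
  exact (hasDerivAt_inv hx).comp_hasFDerivAt x hf.hasFDerivAt

end GradientCalculus

section Picone

variable {E : Type*} [NormedAddCommGroup E] [InnerProductSpace ℝ E]

theorem inner_two_mul_smul_sub_sq_smul_le (a b : E) (t : ℝ) :
    ⟪a, (2 * t) • b - t ^ 2 • a⟫ ≤ ‖b‖ ^ 2 := by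
  have h : ‖b‖ ^ 2 - ⟪a, (2 * t) • b - t ^ 2 • a⟫ = ‖b - t • a‖ ^ 2 := by
    rw [norm_sub_sq_real, norm_smul, inner_sub_right, real_inner_smul_right,
      real_inner_smul_right, real_inner_smul_right, real_inner_self_eq_norm_sq,
      real_inner_comm, mul_pow, Real.norm_eq_abs, sq_abs]
    ring
  linarith [sq_nonneg ‖b - t • a‖]

variable [CompleteSpace E] {u v : E → ℝ} {x : E}

theorem hasGradientAt_sq_div (hu : DifferentiableAt ℝ u x) (hv : DifferentiableAt ℝ v x)
    (hux : u x ≠ 0) :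
    HasGradientAt (fun z => v z ^ 2 / u z)
      ((2 * (v x / u x)) • gradient v x - (v x / u x) ^ 2 • gradient u x) x := by
  have h := (hv.hasGradientAt.mul hv.hasGradientAt).mul (hu.hasGradientAt.inv hux)
  simp only [← sq, ← div_eq_mul_inv] at h
  convert h using 1
  field_simp
  module

theorem inner_gradient_gradient_sq_div_le (hu : DifferentiableAt ℝ u x)
    (hv : DifferentiableAt ℝ v x) (hux : u x ≠ 0) :
    ⟪gradient u x, gradient (fun z => v z ^ 2 / u z) x⟫ ≤ ‖gradient v x‖ ^ 2 := by
  rw [(hasGradientAt_sq_div hu hv hux).gradient]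
  exact inner_two_mul_smul_sub_sq_smul_le _ _ _

end Picone

/-- The integral Picone inequality (inequality (4.13) of the paper). -/
theorem picone_integral_inequality
    (Ω : Set (EuclideanSpace ℝ (Fin 2))) (hΩ : MeasurableSet Ω)
    (u v : EuclideanSpace ℝ (Fin 2) → ℝ)
    (hu : ∀ x ∈ Ω, DifferentiableAt ℝ u x)
    (hv : ∀ x ∈ Ω, DifferentiableAt ℝ v x)
    (hpos : ∀ x ∈ Ω, 0 < u x)
    (hint1 : IntegrableOn
      (fun x => ⟪gradient u x, gradient (fun z => (v z) ^ 2 / u z) x⟫) Ω)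
    (hint2 : IntegrableOn (fun x => ‖gradient v x‖ ^ 2) Ω) :
    ∫ x in Ω, ⟪gradient u x, gradient (fun z => (v z) ^ 2 / u z) x⟫
      ≤ ∫ x in Ω, ‖gradient v x‖ ^ 2 :=
  setIntegral_mono_on hint1 hint2 hΩ fun x hx =>
    inner_gradient_gradient_sq_div_le (hu x hx) (hv x hx) (hpos x hx).ne'
end

section
/- Let 0 < T ≤ t⋆ be real numbers and M ≥ 0. Let g : ℝ → ℝ be measurable with 0 ≤ g on (0, t⋆) and g square-integrable on (0, t⋆); let G : ℝ → ℝ be measurable with 0 ≤ G on (0, T) and G square-integrable on (0, T); let φ : ℝ → ℝ be measurable with 0 ≤ φ(α) ≤ M for all α ∈ (0, T). Assume g(α) ≤ G(α) for almost every α ∈ (0, T) and ∫_0^{t⋆} g(α)² dα = ∫_0^{T} G(α)² dα. Then ∫_0^{T} φ(α)²·g(α)² dα + M²·∫_{T}^{t⋆} g(α)² dα ≥ ∫_0^{T} φ(α)²·G(α)² dα. -/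
open Set MeasureTheory intervalIntegral

/-! The pointwise inequality `φ²G² ≤ φ²g² + M²(G² - g²)` on `(0, T)` is
`(M² - φ²)(G² - g²) ≥ 0`. Integrating it over `(0, T)`, the area condition turns
`M²(∫₀^T G² - ∫₀^T g²)` into `M² ∫_T^{t⋆} g²`. -/

theorem mul_le_mul_add_mul_sub_of_le {x y z m : ℝ} (hxm : x ≤ m) (hyz : y ≤ z) :
    x * z ≤ x * y + m * (z - y) := by
  nlinarith [mul_nonneg (sub_nonneg.2 hxm) (sub_nonneg.2 hyz)]

theorem integral_mul_le_integral_mul_add_mul_sub {α : Type*} [MeasurableSpace α]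
    {μ : Measure α} {w f F : α → ℝ} {m : ℝ} (hw : AEStronglyMeasurable w μ)
    (hw0 : ∀ᵐ x ∂μ, 0 ≤ w x) (hwm : ∀ᵐ x ∂μ, w x ≤ m)
    (hf : Integrable f μ) (hF : Integrable F μ) (hfF : f ≤ᵐ[μ] F) :
    ∫ x, w x * F x ∂μ ≤ (∫ x, w x * f x ∂μ) + m * ((∫ x, F x ∂μ) - ∫ x, f x ∂μ) := by
  have hw_bdd : ∀ᵐ x ∂μ, ‖w x‖ ≤ m := by
    filter_upwards [hw0, hwm] with x h0 hm
    rwa [Real.norm_of_nonneg h0]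
  have hwf : Integrable (fun x => w x * f x) μ := hf.bdd_mul hw hw_bdd
  have hwF : Integrable (fun x => w x * F x) μ := hF.bdd_mul hw hw_bdd
  have hdiff : Integrable (fun x => m * (F x - f x)) μ := (hF.sub hf).const_mul m
  have hpoint : ∀ᵐ x ∂μ, w x * F x ≤ w x * f x + m * (F x - f x) := by
    filter_upwards [hwm, hfF] with x hm hle
    exact mul_le_mul_add_mul_sub_of_le hm hle
  calc ∫ x, w x * F x ∂μ ≤ ∫ x, (w x * f x + m * (F x - f x)) ∂μ :=
        integral_mono_ae hwF (hwf.add hdiff) hpoint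
    _ = (∫ x, w x * f x ∂μ) + m * ((∫ x, F x ∂μ) - ∫ x, f x ∂μ) := by
        rw [integral_add hwf hdiff, MeasureTheory.integral_const_mul,
          integral_sub hF hf]

theorem key_integral_estimate_increasing_general
    (T tstar M : ℝ) (hT : 0 < T) (hTt : T ≤ tstar)
    (g G φ : ℝ → ℝ)
    (hgnn : ∀ α ∈ Ioo (0 : ℝ) tstar, 0 ≤ g α)
    (hgint : IntervalIntegrable (fun α => (g α) ^ 2) volume 0 tstar)
    (hGint : IntervalIntegrable (fun α => (G α) ^ 2) volume 0 T)
    (hφm : Measurable φ) (hφ : ∀ α ∈ Ioo (0 : ℝ) T, 0 ≤ φ α ∧ φ α ≤ M)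
    (hgG : ∀ᵐ α ∂volume, α ∈ Ioo (0 : ℝ) T → g α ≤ G α)
    (harea : ∫ α in (0 : ℝ)..tstar, (g α) ^ 2 = ∫ α in (0 : ℝ)..T, (G α) ^ 2) :
    (∫ α in (0 : ℝ)..T, (φ α) ^ 2 * (g α) ^ 2) + M ^ 2 * ∫ α in T..tstar, (g α) ^ 2
      ≥ ∫ α in (0 : ℝ)..T, (φ α) ^ 2 * (G α) ^ 2 := by
  have hgT : IntervalIntegrable (fun α => (g α) ^ 2) volume 0 T :=
    hgint.mono_set (uIcc_subset_uIcc_left (mem_uIcc_of_le hT.le hTt))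
  have htail : ∫ α in T..tstar, (g α) ^ 2
      = (∫ α in (0 : ℝ)..T, (G α) ^ 2) - ∫ α in (0 : ℝ)..T, (g α) ^ 2 := by
    rw [← harea, integral_interval_sub_left hgint hgT]
  have hIoo : ∀ᵐ α ∂volume.restrict (Ioo (0 : ℝ) T), α ∈ Ioo (0 : ℝ) T :=
    ae_restrict_mem measurableSet_Ioo
  have hsq : ∀ᵐ α ∂volume.restrict (Ioo (0 : ℝ) T), (g α) ^ 2 ≤ (G α) ^ 2 := by
    filter_upwards [hIoo, (ae_restrict_iff' measurableSet_Ioo).2 hgG] with α hα hle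
    exact pow_le_pow_left₀ (hgnn α ⟨hα.1, hα.2.trans_le hTt⟩) hle 2
  have key := integral_mul_le_integral_mul_add_mul_sub (m := M ^ 2)
    (hφm.pow_const 2).aestronglyMeasurable (hIoo.mono fun α _ => sq_nonneg (φ α))
    (hIoo.mono fun α hα => pow_le_pow_left₀ (hφ α hα).1 (hφ α hα).2 2)
    (hgT.1.mono_set Ioo_subset_Ioc_self) (hGint.1.mono_set Ioo_subset_Ioc_self) hsq
  simp only [intervalIntegral.integral_of_le hT.le, integral_Ioc_eq_integral_Ioo] at htail ⊢
  rw [htail]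
  exact key

/-- The key integral estimate (3.15) in the proof of Theorem 3.1 for `h_in > 0`:
with `0 ≤ φ ≤ M`, `g ≤ G` a.e. on `(0, T)`, and
`∫₀^{t⋆} g² = ∫₀^{T} G²`, one has
`∫₀^{T} φ²g² + M²∫_T^{t⋆} g² ≥ ∫₀^{T} φ²G²`. -/
theorem key_integral_estimate_increasing
    (T tstar M : ℝ) (hT : 0 < T) (hTt : T ≤ tstar) (hM : 0 ≤ M)
    (g G φ : ℝ → ℝ)
    (hgm : Measurable g) (hgnn : ∀ α ∈ Ioo (0 : ℝ) tstar, 0 ≤ g α)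
    (hgint : IntervalIntegrable (fun α => (g α) ^ 2) volume 0 tstar)
    (hGm : Measurable G) (hGnn : ∀ α ∈ Ioo (0 : ℝ) T, 0 ≤ G α)
    (hGint : IntervalIntegrable (fun α => (G α) ^ 2) volume 0 T)
    (hφm : Measurable φ) (hφ : ∀ α ∈ Ioo (0 : ℝ) T, 0 ≤ φ α ∧ φ α ≤ M)
    (hgG : ∀ᵐ α ∂volume, α ∈ Ioo (0 : ℝ) T → g α ≤ G α)
    (harea : ∫ α in (0 : ℝ)..tstar, (g α) ^ 2 = ∫ α in (0 : ℝ)..T, (G α) ^ 2) :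
    (∫ α in (0 : ℝ)..T, (φ α) ^ 2 * (g α) ^ 2) + M ^ 2 * ∫ α in T..tstar, (g α) ^ 2
      ≥ ∫ α in (0 : ℝ)..T, (φ α) ^ 2 * (G α) ^ 2 :=
  key_integral_estimate_increasing_general T tstar M hT hTt g G φ hgnn hgint hGint hφm hφ hgG harea
end

section
/- Let 0 < T ≤ t⋆ be real numbers and 0 ≤ m ≤ C. Let g : ℝ → ℝ be measurable with 0 ≤ g on (0, t⋆) and g square-integrable on (0, t⋆); let G : ℝ → ℝ be measurable with 0 ≤ G on (0, T) and G square-integrable on (0, T); let φ : ℝ → ℝ be measurable with m ≤ φ(α) ≤ C for all α ∈ (0, T). Assume g(α) ≤ G(α) for almost every α ∈ (0, T) and ∫_0^{t⋆} g(α)² dα = ∫_0^{T} G(α)² dα. Then ∫_0^{T} φ(α)²·g(α)² dα + m²·∫_{T}^{t⋆} g(α)² dα ≤ ∫_0^{T} φ(α)²·G(α)² dα. -/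
open Set MeasureTheory intervalIntegral

/-!
On `(0, T)` we have `m² ≤ φ²` and `g² ≤ G²`, so the rearrangement inequality gives
`φ²g² + m²G² ≤ φ²G² + m²g²` pointwise. Integrating over `(0, T)` and using the equal-area
condition in the form `∫_T^{t⋆} g² = ∫₀^T G² - ∫₀^T g²` yields the estimate.
-/

theorem integral_mul_add_mul_integral_sub_le {α : Type*} [MeasurableSpace α] {μ : Measure α}
    {w u v : α → ℝ} {c : ℝ} (hwu : Integrable (fun x => w x * u x) μ)
    (hwv : Integrable (fun x => w x * v x) μ) (hu : Integrable u μ) (hv : Integrable v μ)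
    (hcw : ∀ᵐ x ∂μ, c ≤ w x) (huv : ∀ᵐ x ∂μ, u x ≤ v x) :
    ∫ x, w x * u x ∂μ + c * (∫ x, v x ∂μ - ∫ x, u x ∂μ) ≤ ∫ x, w x * v x ∂μ := by
  have hpt : ∀ᵐ x ∂μ, c * v x + w x * u x ≤ c * u x + w x * v x := by
    filter_upwards [hcw, huv] with x hc hle
    exact mul_add_mul_le_mul_add_mul hc hle
  have hint := integral_mono_ae ((hv.const_mul c).add hwu) ((hu.const_mul c).add hwv) hpt
  simp only [Pi.add_apply] at hint
  rw [integral_add (hv.const_mul c) hwu, integral_add (hu.const_mul c) hwv,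
    MeasureTheory.integral_const_mul, MeasureTheory.integral_const_mul] at hint
  linarith

theorem key_integral_estimate_decreasing_general
    (T tstar m C : ℝ) (hT : 0 < T) (hTt : T ≤ tstar) (hm : 0 ≤ m)
    (g G φ : ℝ → ℝ)
    (hgnn : ∀ α ∈ Ioo (0 : ℝ) tstar, 0 ≤ g α)
    (hgint : IntervalIntegrable (fun α => (g α) ^ 2) volume 0 tstar)
    (hGint : IntervalIntegrable (fun α => (G α) ^ 2) volume 0 T)
    (hφm : Measurable φ) (hφ : ∀ α ∈ Ioo (0 : ℝ) T, m ≤ φ α ∧ φ α ≤ C)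
    (hgG : ∀ᵐ α ∂volume, α ∈ Ioo (0 : ℝ) T → g α ≤ G α)
    (harea : ∫ α in (0 : ℝ)..tstar, (g α) ^ 2 = ∫ α in (0 : ℝ)..T, (G α) ^ 2) :
    (∫ α in (0 : ℝ)..T, (φ α) ^ 2 * (g α) ^ 2) + m ^ 2 * ∫ α in T..tstar, (g α) ^ 2
      ≤ ∫ α in (0 : ℝ)..T, (φ α) ^ 2 * (G α) ^ 2 := by
  have hT_mem : T ∈ uIcc 0 tstar := by rw [uIcc_of_le (hT.le.trans hTt)]; exact ⟨hT.le, hTt⟩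
  have hg0T := hgint.mono_set (uIcc_subset_uIcc_left hT_mem)
  rw [← integral_interval_sub_left hgint hg0T, harea]
  simp only [integral_of_le hT.le, integral_Ioc_eq_integral_Ioo]
  set μ := volume.restrict (Ioo (0 : ℝ) T)
  have hIoo : ∀ᵐ α ∂μ, α ∈ Ioo 0 T := ae_restrict_mem measurableSet_Ioo
  have hφ_lower : ∀ᵐ α ∂μ, m ^ 2 ≤ φ α ^ 2 := by
    filter_upwards [hIoo] with α hα
    exact pow_le_pow_left₀ hm (hφ α hα).1 2
  have hφ_upper : ∀ᵐ α ∂μ, ‖φ α ^ 2‖ ≤ C ^ 2 := by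
    filter_upwards [hIoo] with α hα
    have hφ0 : 0 ≤ φ α := hm.trans (hφ α hα).1
    rw [norm_pow, Real.norm_of_nonneg hφ0]
    exact pow_le_pow_left₀ hφ0 (hφ α hα).2 2
  have hgG_sq : ∀ᵐ α ∂μ, g α ^ 2 ≤ G α ^ 2 := by
    filter_upwards [hIoo, ae_restrict_of_ae hgG] with α hα hle
    exact pow_le_pow_left₀ (hgnn α ⟨hα.1, hα.2.trans_le hTt⟩) (hle hα) 2
  have hg := (intervalIntegrable_iff_integrableOn_Ioo_of_le hT.le).1 hg0T
  have hG := (intervalIntegrable_iff_integrableOn_Ioo_of_le hT.le).1 hGint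
  have hφ_meas : AEStronglyMeasurable (fun α => φ α ^ 2) μ :=
    (hφm.pow_const 2).aestronglyMeasurable
  exact integral_mul_add_mul_integral_sub_le (hg.bdd_mul hφ_meas hφ_upper)
    (hG.bdd_mul hφ_meas hφ_upper) hg hG hφ_lower hgG_sq

/-- The key integral estimate (3.22) in the proof of Theorem 3.1 for `h_in < 0`:
with `m ≤ φ ≤ C`, `g ≤ G` a.e. on `(0, T)`, and
`∫₀^{t⋆} g² = ∫₀^{T} G²`, one has
`∫₀^{T} φ²g² + m²∫_T^{t⋆} g² ≤ ∫₀^{T} φ²G²`. -/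
theorem key_integral_estimate_decreasing
    (T tstar m C : ℝ) (hT : 0 < T) (hTt : T ≤ tstar) (hm : 0 ≤ m) (hmC : m ≤ C)
    (g G φ : ℝ → ℝ)
    (hgm : Measurable g) (hgnn : ∀ α ∈ Ioo (0 : ℝ) tstar, 0 ≤ g α)
    (hgint : IntervalIntegrable (fun α => (g α) ^ 2) volume 0 tstar)
    (hGm : Measurable G) (hGnn : ∀ α ∈ Ioo (0 : ℝ) T, 0 ≤ G α)
    (hGint : IntervalIntegrable (fun α => (G α) ^ 2) volume 0 T)
    (hφm : Measurable φ) (hφ : ∀ α ∈ Ioo (0 : ℝ) T, m ≤ φ α ∧ φ α ≤ C)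
    (hgG : ∀ᵐ α ∂volume, α ∈ Ioo (0 : ℝ) T → g α ≤ G α)
    (harea : ∫ α in (0 : ℝ)..tstar, (g α) ^ 2 = ∫ α in (0 : ℝ)..T, (G α) ^ 2) :
    (∫ α in (0 : ℝ)..T, (φ α) ^ 2 * (g α) ^ 2) + m ^ 2 * ∫ α in T..tstar, (g α) ^ 2
      ≤ ∫ α in (0 : ℝ)..T, (φ α) ^ 2 * (G α) ^ 2 :=
  key_integral_estimate_decreasing_general T tstar m C hT hTt hm g G φ hgnn hgint hGint hφm hφ hgG
    harea
end
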